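/- Let S be a positive definite symmetric 2×2 real matrix, T a positive semidefinite symmetric 2×2 real matrix, and K, n > 0 reals with trace(S⁻¹T) > 2K/n and T₂₂ − m_min·S₂₂ ≠ 0. Define f(β, x) = trace( (S⁻¹(T − (K/n)S − x·a(β)a(β)ᵀ))² ) for β ∈ ℝ and x ∈ [0, ∞). Then f attains its minimum over ℝ × [0, ∞) at the point (β̂_LIML, x̂) where x̂ = (m_max − K/n)/(âᵀS⁻¹â) and â = a(β̂_LIML). -/

import Mathlib

/-!
Write `W = S⁻¹`, `c = K/n`, `A = T - cS` and `a = a(β)`. Expanding the square,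
`f β x = tr((WA)²) - 2x·r(a) + x²·g(a)²` with `r(a) = aᵀWAWa` and `g(a) = aᵀWa`.
For a 2×2 pencil, Cayley–Hamilton for `S⁻¹T` gives `(m_max S - T) S⁻¹ (T - m_min S) = 0`, which
forces `m_max S - T ⪰ 0`, hence `r(a) ≤ (m_max - c)·g(a)` for every `a`, and makes this an equality
on the column space of `T - m_min S`, which contains `â`. So for `x ≥ 0`,
`f β x ≥ tr((WA)²) - (m_max - c)²`, and `x̂` is chosen so that `(β̂, x̂)` attains this bound.
-/

open Matrix

/-- `a(β) = (β, 1)ᵀ`. -/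
def aVec (β : ℝ) : Fin 2 → ℝ := ![β, 1]

namespace Matrix

section Trace

variable {n R : Type*} [Fintype n] [CommRing R]

theorem trace_mul_vecMulVec (P : Matrix n n R) (v w : n → R) :
    (P * vecMulVec v w).trace = w ⬝ᵥ P *ᵥ v := by
  rw [mul_vecMulVec, trace_vecMulVec, dotProduct_comm]

theorem trace_sq_mul_sub_smul_vecMulVec [DecidableEq n] (W A : Matrix n n R) (v : n → R) (x : R) :
    ((W * (A - x • vecMulVec v v)) ^ 2).trace =
      ((W * A) ^ 2).trace - 2 * x * (v ⬝ᵥ (W * A * W) *ᵥ v) + x ^ 2 * (v ⬝ᵥ W *ᵥ v) ^ 2 := by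
  set P := W * vecMulVec v v
  have hexpand : (W * (A - x • vecMulVec v v)) ^ 2 =
      (W * A) ^ 2 - x • (W * A * P) - x • (P * (W * A)) + x ^ 2 • (P * P) := by
    simp only [P, mul_sub, sub_mul, mul_smul_comm, smul_mul, sq]
    module
  have hAP : (W * A * P).trace = v ⬝ᵥ (W * A * W) *ᵥ v := by
    rw [← Matrix.mul_assoc, trace_mul_vecMulVec]
  have hPA : (P * (W * A)).trace = v ⬝ᵥ (W * A * W) *ᵥ v := by
    rw [trace_mul_comm, hAP]
  have hPP : (P * P).trace = (v ⬝ᵥ W *ᵥ v) ^ 2 := by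
    dsimp only [P]
    rw [mul_vecMulVec, vecMulVec_mul_vecMulVec, trace_vecMulVec, dotProduct_smul, smul_eq_mul,
      dotProduct_comm, sq]
  rw [hexpand, trace_add, trace_sub, trace_sub, trace_smul, trace_smul, trace_smul, hAP, hPA, hPP]
  simp only [smul_eq_mul]
  ring

end Trace

section Fin2

variable {K : Type*} [Field K]

theorem mem_spectrum_iff_fin_two (X : Matrix (Fin 2) (Fin 2) K) (μ : K) :
    μ ∈ spectrum K X ↔ μ ^ 2 - X.trace * μ + X.det = 0 := by
  simp [mem_spectrum_iff_isRoot_charpoly, charpoly_fin_two]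

theorem sq_sub_trace_smul_add_det_smul_one_fin_two (X : Matrix (Fin 2) (Fin 2) K) :
    X ^ 2 - X.trace • X + X.det • (1 : Matrix (Fin 2) (Fin 2) K) = 0 := by
  simpa [charpoly_fin_two, Algebra.smul_def] using X.aeval_self_charpoly

theorem sub_smul_one_mul_sub_smul_one_eq_zero_fin_two [LinearOrder K] [IsStrictOrderedRing K]
    (X : Matrix (Fin 2) (Fin 2) K) {m M : K} (hm : m ∈ spectrum K X) (hM : M ∈ spectrum K X)
    (hbounds : spectrum K X ⊆ Set.Icc m M) :
    (X - M • 1) * (X - m • 1) = 0 := by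
  have hpartner : ∀ μ ∈ spectrum K X, X.trace - μ ∈ spectrum K X := fun μ hμ => by
    rw [mem_spectrum_iff_fin_two] at hμ ⊢
    linear_combination hμ
  have htrace : X.trace = m + M := by
    have h₁ := (hbounds (hpartner m hm)).2
    have h₂ := (hbounds (hpartner M hM)).1
    linarith
  have hdet : X.det = m * M := by
    rw [mem_spectrum_iff_fin_two, htrace] at hm
    linear_combination hm
  calc (X - M • 1) * (X - m • 1)
      = X ^ 2 - X.trace • X + X.det • (1 : Matrix (Fin 2) (Fin 2) K) := by
        rw [htrace, hdet]
        simp only [sq, sub_mul, mul_sub, smul_mul, mul_smul_comm, Matrix.mul_one, Matrix.one_mul]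
        module
    _ = 0 := sq_sub_trace_smul_add_det_smul_one_fin_two X

end Fin2

section Pencil

variable {n : Type*} [Fintype n] [DecidableEq n]

theorem smul_sub_mul_inv_mul_sub_smul {K : Type*} [Field K] {S : Matrix n n K} (hS : IsUnit S.det)
    (T : Matrix n n K) (m M : K) :
    (M • S - T) * S⁻¹ * (T - m • S) = -(S * ((S⁻¹ * T - M • 1) * (S⁻¹ * T - m • 1))) := by
  have factor : ∀ μ : K, T - μ • S = S * (S⁻¹ * T - μ • 1) := fun μ => by
    rw [mul_sub, mul_nonsing_inv_cancel_left _ _ hS, mul_smul_comm, Matrix.mul_one]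
  rw [← neg_sub, factor, factor, neg_mul, neg_mul, Matrix.mul_assoc, Matrix.mul_assoc,
    nonsing_inv_mul_cancel_left _ _ hS]

/-- Since `(M S - T) + (T - m S) = (M - m) S`, the hypothesis says `B S⁻¹ B = (M - m) B` for
`B = M S - T`, and `B S⁻¹ B ⪰ 0`. -/
theorem posSemidef_smul_sub_of_mul_inv_mul_eq_zero {S T : Matrix n n ℝ} (hS : S.PosDef)
    (hT : T.IsHermitian) {m M : ℝ} (hmM : m ≤ M) (h : (M • S - T) * S⁻¹ * (T - m • S) = 0) :
    (M • S - T).PosSemidef := by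
  set B := M • S - T with hB_def
  have hB : B.IsHermitian := (hS.isHermitian.smul (IsSelfAdjoint.all M)).sub hT
  have hSinv : S⁻¹.PosDef := hS.inv
  have hsquare : B * S⁻¹ * B = (M - m) • B := by
    have hsplit : B = (M - m) • S - (T - m • S) := by rw [hB_def]; module
    calc B * S⁻¹ * B = B * S⁻¹ * ((M - m) • S - (T - m • S)) := by rw [← hsplit]
      _ = (M - m) • B := by
        rw [mul_sub, h, sub_zero, mul_smul_comm,
          nonsing_inv_mul_cancel_right _ _ ((isUnit_iff_isUnit_det S).1 hS.isUnit)]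
  have hpsd : ((M - m) • B).PosSemidef := by
    simpa only [← hsquare, hB.eq] using hSinv.posSemidef.conjTranspose_mul_mul_same B
  rcases hmM.lt_or_eq with hlt | rfl
  · simpa [smul_smul, (sub_pos.2 hlt).ne'] using hpsd.smul (inv_nonneg.2 (sub_pos.2 hlt).le)
  · refine .of_dotProduct_mulVec_nonneg hB fun u => ?_
    have hBu : B *ᵥ u = 0 := by
      by_contra hBu
      have hzero : star (B *ᵥ u) ⬝ᵥ S⁻¹ *ᵥ (B *ᵥ u) = 0 := by
        rw [star_mulVec, dotProduct_mulVec, vecMul_vecMul, ← dotProduct_mulVec, mulVec_mulVec,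
          hB.eq, hsquare, sub_self, zero_smul]
        simp
      exact (hSinv.dotProduct_mulVec_pos hBu).ne' hzero
    simp [hBu]

theorem inv_mul_sub_smul_mul_inv {K : Type*} [Field K] {S : Matrix n n K} (hS : IsUnit S.det)
    (T : Matrix n n K) (c M : K) :
    S⁻¹ * (T - c • S) * S⁻¹ = (M - c) • S⁻¹ - S⁻¹ * (M • S - T) * S⁻¹ := by
  simp only [mul_sub, sub_mul, mul_smul_comm, smul_mul, nonsing_inv_mul _ hS, Matrix.one_mul]
  module

theorem dotProduct_inv_mul_sub_smul_mul_inv_mulVec_le {S T : Matrix n n ℝ} (hS : S.PosDef)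
    {M : ℝ} (hB : (M • S - T).PosSemidef) (c : ℝ) (v : n → ℝ) :
    v ⬝ᵥ (S⁻¹ * (T - c • S) * S⁻¹) *ᵥ v ≤ (M - c) * (v ⬝ᵥ S⁻¹ *ᵥ v) := by
  have hgap := (hB.conjTranspose_mul_mul_same S⁻¹).dotProduct_mulVec_nonneg v
  rw [hS.inv.isHermitian.eq, star_trivial] at hgap
  rw [inv_mul_sub_smul_mul_inv ((isUnit_iff_isUnit_det S).1 hS.isUnit) T c M, sub_mulVec,
    dotProduct_sub, smul_mulVec, dotProduct_smul, smul_eq_mul]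
  linarith

theorem dotProduct_inv_mul_sub_smul_mul_inv_mulVec_eq {K : Type*} [Field K]
    {S T : Matrix n n K} (hS : IsUnit S.det) {m M : K} (h : (M • S - T) * S⁻¹ * (T - m • S) = 0)
    (c : K) {v : n → K} (hv : v ∈ Set.range (T - m • S).mulVec) :
    v ⬝ᵥ (S⁻¹ * (T - c • S) * S⁻¹) *ᵥ v = (M - c) * (v ⬝ᵥ S⁻¹ *ᵥ v) := by
  obtain ⟨u, hu⟩ := hv
  have hgap : (S⁻¹ * (M • S - T) * S⁻¹) *ᵥ v = 0 := by
    rw [← hu, mulVec_mulVec, Matrix.mul_assoc, Matrix.mul_assoc, ← Matrix.mul_assoc _ S⁻¹, h,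
      Matrix.mul_zero, zero_mulVec]
  rw [inv_mul_sub_smul_mul_inv hS T c M, sub_mulVec, hgap, sub_zero, smul_mulVec, dotProduct_smul,
    smul_eq_mul]

end Pencil

end Matrix

theorem quadratic_le_quadratic_of_le {C q g r x g' r' x' : ℝ} (hx : 0 ≤ x) (hr : r ≤ q * g)
    (hr' : r' = q * g') (hx' : x' * g' = q) :
    C - 2 * x' * r' + x' ^ 2 * g' ^ 2 ≤ C - 2 * x * r + x ^ 2 * g ^ 2 := by
  have hmin : C - 2 * x' * r' + x' ^ 2 * g' ^ 2 = C - q ^ 2 := by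
    rw [hr', ← hx']; ring
  nlinarith [sq_nonneg (x * g - q), mul_le_mul_of_nonneg_left hr hx]

theorem aVec_ne_zero (β : ℝ) : aVec β ≠ 0 := fun h => by
  simpa [aVec] using congrFun h 1

theorem aVec_div_eq_mulVec_single (A : Matrix (Fin 2) (Fin 2) ℝ) (hA : A 1 1 ≠ 0) :
    aVec (A 0 1 / A 1 1) = A *ᵥ Pi.single 1 (A 1 1)⁻¹ := by
  ext i
  fin_cases i <;> simp [aVec, mulVec_single, div_eq_mul_inv, hA]

theorem stmt_11_general (S T : Matrix (Fin 2) (Fin 2) ℝ) (hS : S.PosDef) (hT : T.PosSemidef)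
    (K n : ℝ)
    (mmin mmax : ℝ)
    (hmin : mmin ∈ spectrum ℝ (S⁻¹ * T)) (hmax : mmax ∈ spectrum ℝ (S⁻¹ * T))
    (hbounds : ∀ μ ∈ spectrum ℝ (S⁻¹ * T), mmin ≤ μ ∧ μ ≤ mmax)
    (hdenom : T 1 1 - mmin * S 1 1 ≠ 0) :
    letI f : ℝ → ℝ → ℝ := fun β x =>
      ((S⁻¹ * (T - (K / n) • S - x • vecMulVec (aVec β) (aVec β))) ^ 2).trace
    letI βhat : ℝ := (T 0 1 - mmin * S 0 1) / (T 1 1 - mmin * S 1 1)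
    letI xhat : ℝ := (mmax - K / n) / (aVec βhat ⬝ᵥ S⁻¹.mulVec (aVec βhat))
    ∀ (β x : ℝ), 0 ≤ x → f βhat xhat ≤ f β x := by
  intro β x hx
  beta_reduce
  set βhat := (T 0 1 - mmin * S 0 1) / (T 1 1 - mmin * S 1 1)
  have hSdet : IsUnit S.det := (isUnit_iff_isUnit_det S).1 hS.isUnit
  have hpencil : (mmax • S - T) * S⁻¹ * (T - mmin • S) = 0 := by
    rw [smul_sub_mul_inv_mul_sub_smul hSdet, sub_smul_one_mul_sub_smul_one_eq_zero_fin_two _ hmin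
      hmax (fun μ hμ => hbounds μ hμ), Matrix.mul_zero, neg_zero]
  have hpsd := posSemidef_smul_sub_of_mul_inv_mul_eq_zero hS hT.1 (hbounds mmin hmin).2 hpencil
  have haβ : aVec βhat ∈ Set.range (T - mmin • S).mulVec := by
    have h := aVec_div_eq_mulVec_single (T - mmin • S) (by simpa using hdenom)
    simp only [Matrix.sub_apply, Matrix.smul_apply, smul_eq_mul] at h
    exact ⟨_, h.symm⟩
  have hg : 0 < aVec βhat ⬝ᵥ S⁻¹ *ᵥ aVec βhat := by
    simpa using hS.inv.dotProduct_mulVec_pos (aVec_ne_zero βhat)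
  rw [trace_sq_mul_sub_smul_vecMulVec, trace_sq_mul_sub_smul_vecMulVec]
  exact quadratic_le_quadratic_of_le hx (dotProduct_inv_mul_sub_smul_mul_inv_mulVec_le hS hpsd _ _)
    (dotProduct_inv_mul_sub_smul_mul_inv_mulVec_eq hSdet hpencil _ haβ) (div_mul_cancel₀ _ hg.ne')

/-- the MD objective with the RE weight matrix attains its minimum
over `ℝ × [0,∞)` at `(β̂_LIML, x̂)` with `x̂ = (m_max − K/n)/(âᵀS⁻¹â)`. -/
theorem stmt_11 (S T : Matrix (Fin 2) (Fin 2) ℝ) (hS : S.PosDef) (hT : T.PosSemidef)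
    (K n : ℝ) (hK : 0 < K) (hn : 0 < n)
    (mmin mmax : ℝ)
    (hmin : mmin ∈ spectrum ℝ (S⁻¹ * T)) (hmax : mmax ∈ spectrum ℝ (S⁻¹ * T))
    (hbounds : ∀ μ ∈ spectrum ℝ (S⁻¹ * T), mmin ≤ μ ∧ μ ≤ mmax)
    (htr : 2 * K / n < (S⁻¹ * T).trace)
    (hdenom : T 1 1 - mmin * S 1 1 ≠ 0) :
    letI f : ℝ → ℝ → ℝ := fun β x =>
      ((S⁻¹ * (T - (K / n) • S - x • vecMulVec (aVec β) (aVec β))) ^ 2).trace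
    letI βhat : ℝ := (T 0 1 - mmin * S 0 1) / (T 1 1 - mmin * S 1 1)
    letI xhat : ℝ := (mmax - K / n) / (aVec βhat ⬝ᵥ S⁻¹.mulVec (aVec βhat))
    ∀ (β x : ℝ), 0 ≤ x → f βhat xhat ≤ f β x :=
  stmt_11_general S T hS hT K n mmin mmax hmin hmax hbounds hdenom
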